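/- Let T = (T₁, …, Tₙ) be an n-tuple of commuting contractions on H, and let G₁, …, G_{n−1} be positive operators with I − TₙTₙ* = G₁ + ⋯ + G_{n−1}. Define Fᵢ² = (∏_{j≠i, 1≤j≤n−1}(Id − C_{T_j}))(Gᵢ), where C_A(X) = AXA*, and assume each Fᵢ² ≥ 0. Then D² − Tₙ D² Tₙ* = Σ_{i=1}^{n−1} (Fᵢ² − Tᵢ Fᵢ² Tᵢ*), where D² = Σ_{k∈{0,1}^{n−1}} (−1)^{|k|} (T₁,…,T_{n−1})^k (T₁,…,T_{n−1})*^k is the Szegő defect of (T₁,…,T_{n−1}). -/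
import Mathlib


open ContinuousLinearMap

variable {H : Type*} [NormedAddCommGroup H] [InnerProductSpace ℂ H] [CompleteSpace H]

/-- The conjugation map `C_A : X ↦ A X A*` on `B(H)`, as a linear endomorphism. -/
noncomputable def conjMap (A : H →L[ℂ] H) : Module.End ℂ (H →L[ℂ] H) where
  toFun X := A * X * ContinuousLinearMap.adjoint A
  map_add' X Y := by simp [mul_add, add_mul]
  map_smul' c X := by simp [mul_smul_comm, smul_mul_assoc]

/-- For a Boolean multi-index `k ∈ {0,1}^m`, the operator `T^k = T₁^{k₁} ⋯ T_m^{k_m}`. -/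
def boolPow {m : ℕ} (T : Fin m → (H →L[ℂ] H)) (k : Fin m → Bool) : H →L[ℂ] H :=
  (List.ofFn fun i => if k i then T i else 1).prod

/-- The weight `|k|` of a Boolean multi-index. -/
def boolWt {m : ℕ} (k : Fin m → Bool) : ℕ := ∑ i, if k i then 1 else 0

/-- The Szegő defect `D² = Σ_{k ∈ {0,1}^m} (−1)^{|k|} T^k T*^k` of a tuple. -/
noncomputable def szegoDefect {m : ℕ} (T : Fin m → (H →L[ℂ] H)) : H →L[ℂ] H :=
  ∑ k : Fin m → Bool,
    ((-1 : ℂ) ^ boolWt k) • (boolPow T k * ContinuousLinearMap.adjoint (boolPow T k))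

/-- The product `∏_{j ≠ i} (Id − C_{T_j})` (ordered composition, factor `i` omitted). -/
noncomputable def prodDeleted {m : ℕ} (T : Fin m → (H →L[ℂ] H)) (i : Fin m) :
    Module.End ℂ (H →L[ℂ] H) :=
  (List.ofFn fun j => if j = i then 1 else (1 - conjMap (T j))).prod

lemma conjMap_apply (A X : H →L[ℂ] H) :
    conjMap A X = A * X * ContinuousLinearMap.adjoint A := rfl

lemma conjMap_mul (A B : H →L[ℂ] H) : conjMap (A * B) = conjMap A * conjMap B := by
  refine LinearMap.ext fun X => ?_
  simp only [Module.End.mul_apply, conjMap_apply, ← ContinuousLinearMap.star_eq_adjoint,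
    star_mul, mul_assoc]

lemma commute_conjMap {A B : H →L[ℂ] H} (h : A * B = B * A) :
    Commute (conjMap A) (conjMap B) := by
  unfold Commute SemiconjBy
  rw [← conjMap_mul, ← conjMap_mul, h]

lemma list_ofFn_prod_extract {R : Type*} [Monoid R] :
    ∀ {m : ℕ} (g : Fin m → R), (∀ i j, Commute (g i) (g j)) → ∀ (i : Fin m),
      (List.ofFn g).prod = g i * (List.ofFn fun j => if j = i then 1 else g j).prod := by
  intro m
  induction m with
  | zero => intro g hg i; exact i.elim0
  | succ n ih =>
    intro g hg i
    rw [List.ofFn_succ, List.ofFn_succ, List.prod_cons, List.prod_cons]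
    refine Fin.cases ?_ ?_ i
    · rw [if_pos rfl, one_mul]
      simp [Fin.succ_ne_zero]
    · intro i'
      rw [if_neg (Fin.succ_ne_zero i').symm]
      have hcond : (fun j : Fin n => if j.succ = i'.succ then (1:R) else g j.succ)
          = fun j : Fin n => if j = i' then 1 else g j.succ := by
        funext j; simp [Fin.succ_inj]
      rw [hcond, ih (fun j => g j.succ) (fun a b => hg _ _) i', ← mul_assoc, ← mul_assoc,
        (hg 0 i'.succ).eq]

lemma boolPow_cons {m : ℕ} (T : Fin (m+1) → (H →L[ℂ] H)) (b : Bool) (k : Fin m → Bool) :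
    boolPow T (Fin.cons b k) =
      (if b then T 0 else 1) * boolPow (fun j => T j.succ) k := by
  unfold boolPow
  rw [List.ofFn_succ, List.prod_cons]
  simp [Fin.cons_zero, Fin.cons_succ]

lemma boolWt_cons {m : ℕ} (b : Bool) (k : Fin m → Bool) :
    boolWt (Fin.cons b k) = (if b then 1 else 0) + boolWt k := by
  unfold boolWt
  rw [Fin.sum_univ_succ]
  simp [Fin.cons_zero, Fin.cons_succ]

lemma szegoDefect_eq_prod_apply_one :
    ∀ {m : ℕ} (T : Fin m → (H →L[ℂ] H)),
      (List.ofFn fun j => (1 : Module.End ℂ (H →L[ℂ] H)) - conjMap (T j)).prod 1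
        = szegoDefect T := by
  intro m
  induction m with
  | zero =>
    intro T
    simp [szegoDefect, boolPow, boolWt, ← ContinuousLinearMap.star_eq_adjoint]
  | succ n ih =>
    intro T
    rw [List.ofFn_succ, List.prod_cons, Module.End.mul_apply, ih (fun j => T j.succ)]
    have hequiv := Fintype.sum_equiv (Fin.consEquiv (fun _ : Fin (n+1) => Bool)).symm
      (fun k : Fin (n+1) → Bool =>
        ((-1 : ℂ) ^ boolWt k) • (boolPow T k * ContinuousLinearMap.adjoint (boolPow T k)))
      (fun p : Bool × (Fin n → Bool) =>
        ((-1 : ℂ) ^ boolWt (Fin.cons p.1 p.2)) • (boolPow T (Fin.cons p.1 p.2) *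
          ContinuousLinearMap.adjoint (boolPow T (Fin.cons p.1 p.2))))
      (fun k => by simp [Fin.consEquiv])
    set S := szegoDefect (fun j => T j.succ) with hS
    have htrue : ∑ k : Fin n → Bool,
        ((-1 : ℂ) ^ boolWt (Fin.cons true k)) • (boolPow T (Fin.cons true k) *
          ContinuousLinearMap.adjoint (boolPow T (Fin.cons true k)))
        = -(T 0 * S * ContinuousLinearMap.adjoint (T 0)) := by
      rw [hS, szegoDefect, Finset.mul_sum, Finset.sum_mul, ← Finset.sum_neg_distrib]
      refine Finset.sum_congr rfl fun k _ => ?_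
      rw [boolPow_cons, boolWt_cons]
      simp only [if_pos, ← ContinuousLinearMap.star_eq_adjoint, star_mul,
        pow_add, pow_one, mul_smul_comm, smul_mul_assoc]
      simp [neg_one_mul, mul_assoc]
    have hfalse : ∑ k : Fin n → Bool,
        ((-1 : ℂ) ^ boolWt (Fin.cons false k)) • (boolPow T (Fin.cons false k) *
          ContinuousLinearMap.adjoint (boolPow T (Fin.cons false k)))
        = S := by
      rw [hS, szegoDefect]
      refine Finset.sum_congr rfl fun k _ => ?_
      rw [boolPow_cons, boolWt_cons]
      simp
    have hsplit : szegoDefect T = S - T 0 * S * ContinuousLinearMap.adjoint (T 0) := by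
      have h1 : szegoDefect T = ∑ p : Bool × (Fin n → Bool),
          ((-1 : ℂ) ^ boolWt (Fin.cons p.1 p.2)) • (boolPow T (Fin.cons p.1 p.2) *
            ContinuousLinearMap.adjoint (boolPow T (Fin.cons p.1 p.2))) := hequiv
      rw [h1, Fintype.sum_prod_type, Fintype.sum_bool, htrue, hfalse]
      abel
    rw [hsplit, LinearMap.sub_apply, Module.End.one_apply, conjMap_apply]

/-- Let `(T₁, …, T_{n−1}, Tₙ)` be commuting contractions, `G₁, …, G_{n−1} ≥ 0` with
`I − TₙTₙ* = G₁ + ⋯ + G_{n−1}`, and `Fᵢ² = (∏_{j≠i}(Id − C_{T_j}))(Gᵢ) ≥ 0`.  Then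
`D² − Tₙ D² Tₙ* = Σᵢ (Fᵢ² − Tᵢ Fᵢ² Tᵢ*)`, where `D²` is the Szegő defect of
`(T₁, …, T_{n−1})`. -/
theorem szegoDefect_difference_eq_sum
    {m : ℕ} (T : Fin m → (H →L[ℂ] H)) (Tn : H →L[ℂ] H)
    (hcomm : ∀ i j, T i * T j = T j * T i)
    (hcommn : ∀ i, T i * Tn = Tn * T i)
    (hcontr : ∀ i, ‖T i‖ ≤ 1) (hcontrn : ‖Tn‖ ≤ 1)
    (G : Fin m → (H →L[ℂ] H)) (hG : ∀ i, (G i).IsPositive)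
    (hsum : (1 : H →L[ℂ] H) - Tn * ContinuousLinearMap.adjoint Tn = ∑ i, G i)
    (hF : ∀ i, (prodDeleted T i (G i)).IsPositive) :
    szegoDefect T - Tn * szegoDefect T * ContinuousLinearMap.adjoint Tn =
      ∑ i, (prodDeleted T i (G i)
        - T i * prodDeleted T i (G i) * ContinuousLinearMap.adjoint (T i)) := by
  classical
  set P : Module.End ℂ (H →L[ℂ] H) :=
    (List.ofFn fun j => (1 : Module.End ℂ (H →L[ℂ] H)) - conjMap (T j)).prod with hPdef
  have hfac : ∀ i j : Fin m,
      Commute ((1 : Module.End ℂ (H →L[ℂ] H)) - conjMap (T i)) (1 - conjMap (T j)) :=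
    fun i j => ((Commute.one_left _).sub_left
      (((Commute.one_right _).sub_right (commute_conjMap (hcomm i j)))))
  have hPi : ∀ i, P = (1 - conjMap (T i)) * prodDeleted T i := fun i =>
    list_ofFn_prod_extract _ hfac i
  have hP1 : P 1 = szegoDefect T := szegoDefect_eq_prod_apply_one T
  have hPcomm : Commute (conjMap Tn) P := by
    refine Commute.list_prod_right _ _ fun y hy => ?_
    rw [List.mem_ofFn] at hy
    obtain ⟨j, rfl⟩ := hy
    exact (Commute.one_right _).sub_right (commute_conjMap (hcommn j).symm)
  calc szegoDefect T - Tn * szegoDefect T * ContinuousLinearMap.adjoint Tn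
      = P 1 - conjMap Tn (P 1) := by rw [hP1, conjMap_apply]
    _ = P 1 - P (conjMap Tn 1) := by
        have := congrArg (fun f : Module.End ℂ (H →L[ℂ] H) => f 1) hPcomm.eq
        simpa [Module.End.mul_apply] using congrArg (fun x => P 1 - x) this
    _ = P (1 - Tn * ContinuousLinearMap.adjoint Tn) := by
        rw [map_sub, conjMap_apply, mul_one]
    _ = ∑ i, P (G i) := by rw [hsum, map_sum]
    _ = ∑ i, (prodDeleted T i (G i)
        - T i * prodDeleted T i (G i) * ContinuousLinearMap.adjoint (T i)) := by
        refine Finset.sum_congr rfl fun i _ => ?_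
        rw [hPi i, Module.End.mul_apply, LinearMap.sub_apply, Module.End.one_apply,
          conjMap_apply]
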